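/- arXiv:1805.03772 — 5 statements merged into one kernel-verified Lean document; each statement's English description precedes it below -/
import Mathlib

section
/- With notation as above, the coefficient of q^{ℓ(a)} in the structure constant φ(a,a',b) is nonnegative for all a, a', b in W. -/
/-!
Write `a = s_{i₁} ⋯ s_{iₖ}` as a reduced word, so that `T_a = T_{s_{i₁}} ⋯ T_{s_{iₖ}}` and
`k = ℓ(a)`. Left multiplication by `T_s` acts on the coordinate at `b` by
`y_b ↦ y_{sb} + (q - 1) y_b` if `ℓ(sb) < ℓ(b)` and by `y_b ↦ q y_{sb}` otherwise. Both maps send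
polynomials of degree `≤ n` with nonnegative `qⁿ`-coefficient to polynomials of degree `≤ n + 1`
with nonnegative `qⁿ⁺¹`-coefficient (the new top coefficient is that of `y_b`, resp. `y_{sb}`), so
induction along the word, starting from `T_{a'}`, gives the claim.
-/

open Polynomial

def CoeffNonnegAtBound {R : Type*} [Semiring R] [LE R] (n : ℕ) (p : R[X]) : Prop :=
  p.natDegree ≤ n ∧ 0 ≤ p.coeff n

namespace CoeffNonnegAtBound

variable {R : Type*} [Ring R] [LE R] {n : ℕ} {p p' : R[X]}

theorem X_mul (hp : CoeffNonnegAtBound n p) : CoeffNonnegAtBound (n + 1) (X * p) := by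
  refine ⟨?_, by rw [coeff_X_mul]; exact hp.2⟩
  calc (X * p).natDegree ≤ X.natDegree + p.natDegree := natDegree_mul_le
    _ ≤ n + 1 := by have := natDegree_X_le (R := R); have := hp.1; omega

theorem add_X_sub_one_mul (hp : CoeffNonnegAtBound n p) (hp' : CoeffNonnegAtBound n p') :
    CoeffNonnegAtBound (n + 1) (p + (X - 1) * p') := by
  have hdeg : p.natDegree < n + 1 := Nat.lt_succ_of_le hp.1
  have hdeg' : p'.natDegree < n + 1 := Nat.lt_succ_of_le hp'.1
  refine ⟨?_, ?_⟩
  · refine natDegree_add_le_of_degree_le (by omega) ?_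
    calc ((X - 1) * p').natDegree ≤ (X - C 1 : R[X]).natDegree + p'.natDegree :=
          natDegree_mul_le
      _ ≤ n + 1 := by have := natDegree_X_sub_C_le (1 : R); have := hp'.1; omega
  · rw [coeff_add, sub_mul, one_mul, coeff_sub, coeff_X_mul, coeff_eq_zero_of_natDegree_lt hdeg,
      coeff_eq_zero_of_natDegree_lt hdeg', zero_add, sub_zero]
    exact hp'.2

end CoeffNonnegAtBound

structure IsHeckeBasis {B W A H : Type*} [Group W] {M : CoxeterMatrix B} (cs : CoxeterSystem M W)
    [CommRing A] [Ring H] [Algebra A H] (q : A) (T : Module.Basis W A H) : Prop where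
  mul_of_length_add : ∀ w w' : W, cs.length (w * w') = cs.length w + cs.length w' →
    T w * T w' = T (w * w')
  quadratic : ∀ i : B, (T (cs.simple i) + 1) * (T (cs.simple i) - algebraMap A H q) = 0

namespace IsHeckeBasis

variable {B W A H : Type*} [Group W] {M : CoxeterMatrix B} {cs : CoxeterSystem M W}
  [CommRing A] [Ring H] [Algebra A H] {q : A} {T : Module.Basis W A H}

theorem one_mul (hT : IsHeckeBasis cs q T) (w : W) : T 1 * T w = T w := by
  simpa using hT.mul_of_length_add 1 w (by simp)

theorem simple_mul_simple (hT : IsHeckeBasis cs q T) (i : B) :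
    T (cs.simple i) * T (cs.simple i) = (q - 1) • T (cs.simple i) + q • 1 := by
  rw [← sub_eq_zero, ← hT.quadratic i]
  simp only [add_mul, mul_sub, _root_.one_mul, Algebra.algebraMap_eq_smul_one, mul_smul_comm,
    mul_one, sub_smul, one_smul, smul_add]
  abel

theorem simple_mul_of_not_isLeftDescent (hT : IsHeckeBasis cs q T) {w : W} {i : B}
    (h : ¬cs.IsLeftDescent w i) : T (cs.simple i) * T w = T (cs.simple i * w) :=
  hT.mul_of_length_add _ _ (by rw [cs.not_isLeftDescent_iff.mp h, cs.length_simple, add_comm])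

theorem simple_mul_of_isLeftDescent (hT : IsHeckeBasis cs q T) {w : W} {i : B}
    (h : cs.IsLeftDescent w i) :
    T (cs.simple i) * T w = q • T (cs.simple i * w) + (q - 1) • T w := by
  have hw : T (cs.simple i) * T (cs.simple i * w) = T w := by
    rw [hT.simple_mul_of_not_isLeftDescent (cs.isLeftDescent_iff_not_isLeftDescent_mul.mp h),
      cs.simple_mul_simple_cancel_left]
  calc T (cs.simple i) * T w = T (cs.simple i) * T (cs.simple i) * T (cs.simple i * w) := by
        rw [mul_assoc, hw]
    _ = q • T (cs.simple i * w) + (q - 1) • T w := by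
        rw [hT.simple_mul_simple, add_mul, smul_mul_assoc, smul_mul_assoc, hw, _root_.one_mul,
          add_comm]

theorem repr_simple_mul_apply_of_isLeftDescent (hT : IsHeckeBasis cs q T) {b : W} {i : B}
    (hb : cs.IsLeftDescent b i) (y : H) :
    T.repr (T (cs.simple i) * y) b = T.repr y (cs.simple i * b) + (q - 1) * T.repr y b := by
  classical
  have hlinear : Finsupp.lapply b ∘ₗ T.repr.toLinearMap ∘ₗ LinearMap.mulLeft A (T (cs.simple i)) =
      Finsupp.lapply (cs.simple i * b) ∘ₗ T.repr.toLinearMap +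
        (q - 1) • (Finsupp.lapply b ∘ₗ T.repr.toLinearMap) := by
    -- both sides are linear in `y`; on a basis vector `T w`, only `w ∈ {b, s b}` contributes
    refine T.ext fun w => ?_
    by_cases hw : cs.IsLeftDescent w i <;>
      simp [hT.simple_mul_of_isLeftDescent, hT.simple_mul_of_not_isLeftDescent, hw,
        Finsupp.single_apply] <;>
      split_ifs <;>
      grind [cs.simple_mul_simple_cancel_left, cs.isLeftDescent_iff_not_isLeftDescent_mul]
  simpa using LinearMap.congr_fun hlinear y

theorem repr_simple_mul_apply_of_not_isLeftDescent (hT : IsHeckeBasis cs q T) {b : W} {i : B}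
    (hb : ¬cs.IsLeftDescent b i) (y : H) :
    T.repr (T (cs.simple i) * y) b = q * T.repr y (cs.simple i * b) := by
  -- expand the coordinate at `s b` of `T s * (T s * y)` in two ways: by the descent case and by
  -- the quadratic relation
  have h := hT.repr_simple_mul_apply_of_isLeftDescent
    (cs.isLeftDescent_iff_not_isLeftDescent_mul.mpr (by rwa [cs.simple_mul_simple_cancel_left]))
    (T (cs.simple i) * y)
  rw [← mul_assoc, hT.simple_mul_simple, add_mul, smul_mul_assoc, smul_mul_assoc, _root_.one_mul,
    cs.simple_mul_simple_cancel_left] at h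
  simp only [map_add, map_smul, Finsupp.add_apply, Finsupp.smul_apply, smul_eq_mul] at h
  linear_combination -h

end IsHeckeBasis

open CoxeterSystem in
theorem IsHeckeBasis.coeffNonnegAtBound_repr_wordProd_mul {B W H : Type*} [Group W]
    {M : CoxeterMatrix B} {cs : CoxeterSystem M W} [Ring H] [Algebra ℚ[X] H]
    {T : Module.Basis W ℚ[X] H} (hT : IsHeckeBasis cs X T) {ω : List B} (hω : cs.IsReduced ω)
    (a' b : W) : CoeffNonnegAtBound ω.length (T.repr (T (cs.wordProd ω) * T a') b) := by
  classical
  induction ω generalizing b with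
  | nil =>
    rw [wordProd_nil, hT.one_mul, Module.Basis.repr_self, Finsupp.single_apply]
    split_ifs <;> simp [CoeffNonnegAtBound]
  | cons i ω ih =>
    have hω' : cs.IsReduced ω := by simpa using hω.drop 1
    have hlength : cs.length (cs.simple i * cs.wordProd ω) =
        cs.length (cs.simple i) + cs.length (cs.wordProd ω) := by
      rw [← wordProd_cons, hω.eq, hω'.eq, cs.length_simple, List.length_cons, add_comm]
    rw [wordProd_cons, ← hT.mul_of_length_add _ _ hlength, mul_assoc, List.length_cons]
    by_cases hb : cs.IsLeftDescent b i
    · rw [hT.repr_simple_mul_apply_of_isLeftDescent hb]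
      exact (ih hω' _).add_X_sub_one_mul (ih hω' b)
    · rw [hT.repr_simple_mul_apply_of_not_isLeftDescent hb]
      exact (ih hω' _).X_mul

theorem hecke_structure_constant_leading_coeff_nonneg_general
    {B W : Type} [Group W] {M : CoxeterMatrix B} (cs : CoxeterSystem M W)
    (H : Type) [Ring H] [Algebra (Polynomial ℚ) H]
    (T : Module.Basis W (Polynomial ℚ) H)
    (hmul : ∀ w w' : W, cs.length (w * w') = cs.length w + cs.length w' →
      T w * T w' = T (w * w'))
    (hquad : ∀ i : B, (T (cs.simple i) + 1) * (T (cs.simple i) - algebraMap (Polynomial ℚ) H X) = 0)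
    (a a' b : W) :
    0 ≤ (T.repr (T a * T a') b).coeff (cs.length a) := by
  obtain ⟨ω, hω, rfl⟩ := cs.exists_isReduced a
  rw [hω.eq]
  exact (IsHeckeBasis.coeffNonnegAtBound_repr_wordProd_mul ⟨hmul, hquad⟩ hω a' b).2

/-- the coefficient of `q^{ℓ(a)}` in the Hecke algebra structure constant
`φ(a,a',b)` is nonnegative. -/
theorem hecke_structure_constant_leading_coeff_nonneg
    {B W : Type} [Group W] [Finite W] {M : CoxeterMatrix B} (cs : CoxeterSystem M W)
    (H : Type) [Ring H] [Algebra (Polynomial ℚ) H]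
    (T : Module.Basis W (Polynomial ℚ) H)
    (hone : T 1 = 1)
    (hmul : ∀ w w' : W, cs.length (w * w') = cs.length w + cs.length w' →
      T w * T w' = T (w * w'))
    (hquad : ∀ i : B, (T (cs.simple i) + 1) * (T (cs.simple i) - algebraMap (Polynomial ℚ) H X) = 0)
    (a a' b : W) :
    0 ≤ (T.repr (T a * T a') b).coeff (cs.length a) :=
  hecke_structure_constant_leading_coeff_nonneg_general cs H T hmul hquad a a' b
end

section
/- With notation as above, if the coefficient of q^{ℓ(a)} in φ(a,a',b) is nonzero, then either (a'=b and every simple reflection occurring in a reduced expression of a lies in the left descent set of a') or ℓ(b) < ℓ(a'). -/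
open Polynomial

/-!
Write `a = s₁ ⋯ sₖ` as a reduced word and build `T_a T_{a'}` by multiplying `T_{a'}` on the left
by `T_{sₖ}, …, T_{s₁}`. In coordinates, left multiplication by `T_s` sends the `b`-coordinate to
`x_{sb} + (q - 1) x_b` when `s` is a left descent of `b`, and to `q x_{sb}` otherwise. So each
step raises the degree in `q` by at most one, and the coefficient of `q^k` after `k` steps comes
either from the same coordinate `b` (when `s` is a left descent of `b`) or from the coordinate
`sb`, which is one longer than `b`. Following it back to `T_{a'}` gives `ℓ(b) ≤ ℓ(a')`, with
equality only if `b` was never moved, i.e. `b = a'` and every `sⱼ` is a left descent of `a'`.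
-/

/-- The support of `w`: the set of simple-reflection indices appearing in some
(equivalently, any) reduced word for `w`. -/
def CoxeterSystem.support {B W : Type} [Group W] {M : CoxeterMatrix B}
    (cs : CoxeterSystem M W) (w : W) : Set B :=
  {i | ∃ l : List B, cs.IsReduced l ∧ cs.wordProd l = w ∧ i ∈ l}

namespace CoxeterSystem

variable {B W R H : Type*} [Group W] {M : CoxeterMatrix B} {cs : CoxeterSystem M W}
  [CommRing R] [Ring H] [Algebra R H]

theorem IsReduced.of_cons {i : B} {l : List B} (hl : cs.IsReduced (i :: l)) : cs.IsReduced l := by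
  simpa using hl.drop 1

theorem simple_mul_eq_iff_eq_simple_mul {i : B} {b c : W} :
    cs.simple i * c = b ↔ c = cs.simple i * b := by
  constructor <;> rintro rfl <;> simp

variable (cs) in
structure IsHeckeBasis (q : R) (T : Module.Basis W R H) : Prop where
  apply_mul_apply_of_length_mul : ∀ w w' : W, cs.length (w * w') = cs.length w + cs.length w' →
    T w * T w' = T (w * w')
  quadratic : ∀ i : B, (T (cs.simple i) + 1) * (T (cs.simple i) - algebraMap R H q) = 0

namespace IsHeckeBasis

variable {q : R} {T : Module.Basis W R H}

theorem simple_mul_simple (hT : cs.IsHeckeBasis q T) (i : B) :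
    T (cs.simple i) * T (cs.simple i) = (q - 1) • T (cs.simple i) + q • 1 := by
  have h := hT.quadratic i
  rw [Algebra.algebraMap_eq_smul_one, add_mul, one_mul, mul_sub, mul_smul_comm, mul_one] at h
  rw [sub_smul, one_smul]
  exact eq_of_sub_eq_zero (by rw [← h]; abel)

theorem simple_mul_of_not_isLeftDescent (hT : cs.IsHeckeBasis q T) {i : B} {c : W}
    (hc : ¬cs.IsLeftDescent c i) : T (cs.simple i) * T c = T (cs.simple i * c) :=
  hT.apply_mul_apply_of_length_mul _ _ <| by
    rw [cs.not_isLeftDescent_iff.mp hc, cs.length_simple, add_comm]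

theorem simple_mul_of_isLeftDescent (hT : cs.IsHeckeBasis q T) {i : B} {c : W}
    (hc : cs.IsLeftDescent c i) :
    T (cs.simple i) * T c = q • T (cs.simple i * c) + (q - 1) • T c := by
  have hc' : T (cs.simple i) * T (cs.simple i * c) = T c := by
    rw [hT.simple_mul_of_not_isLeftDescent (cs.isLeftDescent_iff_not_isLeftDescent_mul.mp hc),
      cs.simple_mul_simple_cancel_left]
  rw [← hc', ← mul_assoc, hT.simple_mul_simple, add_mul, smul_mul_assoc, smul_mul_assoc, one_mul,
    add_comm]

theorem repr_simple_mul_of_isLeftDescent (hT : cs.IsHeckeBasis q T) {i : B} {b : W}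
    (hb : cs.IsLeftDescent b i) (x : H) :
    T.repr (T (cs.simple i) * x) b = T.repr x (cs.simple i * b) + (q - 1) * T.repr x b := by
  classical
  suffices (T.coord b).comp (LinearMap.mulLeft R (T (cs.simple i))) =
      T.coord (cs.simple i * b) + (q - 1) • T.coord b from
    LinearMap.congr_fun this x
  refine T.ext fun c => ?_
  by_cases hc : cs.IsLeftDescent c i
  · have hcb : cs.simple i * c ≠ b := fun h =>
      (cs.isLeftDescent_iff_not_isLeftDescent_mul.mp hc) (h ▸ hb)
    simp [hT.simple_mul_of_isLeftDescent hc, Finsupp.single_apply, hcb,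
      ← simple_mul_eq_iff_eq_simple_mul, ite_sub_ite]
  · have hcb : c ≠ b := fun h => hc (h ▸ hb)
    simp [hT.simple_mul_of_not_isLeftDescent hc, Finsupp.single_apply,
      simple_mul_eq_iff_eq_simple_mul, hcb]

theorem repr_simple_mul_of_not_isLeftDescent (hT : cs.IsHeckeBasis q T) {i : B} {b : W}
    (hb : ¬cs.IsLeftDescent b i) (x : H) :
    T.repr (T (cs.simple i) * x) b = q * T.repr x (cs.simple i * b) := by
  classical
  suffices (T.coord b).comp (LinearMap.mulLeft R (T (cs.simple i))) =
      q • T.coord (cs.simple i * b) from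
    LinearMap.congr_fun this x
  refine T.ext fun c => ?_
  by_cases hc : cs.IsLeftDescent c i
  · have hcb : c ≠ b := fun h => hb (h ▸ hc)
    simp [hT.simple_mul_of_isLeftDescent hc, Finsupp.single_apply,
      simple_mul_eq_iff_eq_simple_mul, hcb]
  · have hcb : cs.simple i * c ≠ b := fun h =>
      hc (cs.isLeftDescent_iff_not_isLeftDescent_mul.mpr (h ▸ hb))
    simp [hT.simple_mul_of_not_isLeftDescent hc, hcb, ← simple_mul_eq_iff_eq_simple_mul]

theorem apply_one_mul (hT : cs.IsHeckeBasis q T) (w : W) : T 1 * T w = T w := by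
  simpa using hT.apply_mul_apply_of_length_mul 1 w (by simp)

theorem apply_wordProd_cons (hT : cs.IsHeckeBasis q T) {i : B} {l : List B}
    (hl : cs.IsReduced (i :: l)) :
    T (cs.wordProd (i :: l)) = T (cs.simple i) * T (cs.wordProd l) := by
  rw [cs.wordProd_cons]
  refine (hT.apply_mul_apply_of_length_mul _ _ ?_).symm
  rw [← cs.wordProd_cons, hl, hl.of_cons, cs.length_simple, List.length_cons, add_comm]

variable {A : Type*} [CommRing A] [Algebra A[X] H] {T : Module.Basis W A[X] H}

theorem natDegree_repr_wordProd_mul_le (hT : cs.IsHeckeBasis X T) {l : List B}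
    (hl : cs.IsReduced l) (a' b : W) :
    (T.repr (T (cs.wordProd l) * T a') b).natDegree ≤ l.length := by
  classical
  induction l generalizing b with
  | nil =>
    rw [cs.wordProd_nil, hT.apply_one_mul, T.repr_self, Finsupp.single_apply]
    split_ifs <;> simp
  | cons i l ih =>
    rw [hT.apply_wordProd_cons hl, mul_assoc, List.length_cons]
    by_cases hb : cs.IsLeftDescent b i
    · rw [hT.repr_simple_mul_of_isLeftDescent hb]
      have hX : (X - 1 : A[X]).natDegree ≤ 1 := by compute_degree
      refine (natDegree_add_le _ _).trans (max_le ((ih hl.of_cons _).trans l.length.le_succ) ?_)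
      exact natDegree_mul_le.trans ((add_le_add hX (ih hl.of_cons b)).trans_eq (add_comm _ _))
    · rw [hT.repr_simple_mul_of_not_isLeftDescent hb]
      exact natDegree_mul_le.trans
        ((add_le_add natDegree_X_le (ih hl.of_cons _)).trans_eq (add_comm _ _))

theorem lt_or_eq_and_isLeftDescent_of_coeff_length_ne_zero (hT : cs.IsHeckeBasis X T)
    {l : List B} (hl : cs.IsReduced l) {a' b : W}
    (h : (T.repr (T (cs.wordProd l) * T a') b).coeff l.length ≠ 0) :
    cs.length b < cs.length a' ∨ (a' = b ∧ ∀ j ∈ l, cs.IsLeftDescent a' j) := by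
  classical
  induction l generalizing b with
  | nil =>
    rw [cs.wordProd_nil, hT.apply_one_mul, T.repr_self, Finsupp.single_apply] at h
    by_cases hab : a' = b
    · exact Or.inr ⟨hab, by simp⟩
    · simp [hab] at h
  | cons i l ih =>
    rw [hT.apply_wordProd_cons hl, mul_assoc, List.length_cons] at h
    by_cases hb : cs.IsLeftDescent b i
    · have hdeg (c : W) : (T.repr (T (cs.wordProd l) * T a') c).coeff (l.length + 1) = 0 :=
        coeff_eq_zero_of_natDegree_lt <|
          (hT.natDegree_repr_wordProd_mul_le hl.of_cons a' c).trans_lt l.length.lt_succ_self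
      rw [hT.repr_simple_mul_of_isLeftDescent hb, coeff_add, sub_mul, one_mul, coeff_sub,
        coeff_X_mul, hdeg, hdeg, zero_add, sub_zero] at h
      rcases ih hl.of_cons h with hlt | ⟨rfl, hdesc⟩
      · exact Or.inl hlt
      · exact Or.inr ⟨rfl, List.forall_mem_cons.mpr ⟨hb, hdesc⟩⟩
    · rw [hT.repr_simple_mul_of_not_isLeftDescent hb, coeff_X_mul] at h
      have hlen := cs.not_isLeftDescent_iff.mp hb
      rcases ih hl.of_cons h with hlt | ⟨rfl, -⟩ <;> omega

end IsHeckeBasis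

end CoxeterSystem

theorem hecke_structure_constant_leading_coeff_ne_zero_general
    {B W : Type} [Group W] {M : CoxeterMatrix B} (cs : CoxeterSystem M W)
    (H : Type) [Ring H] [Algebra (Polynomial ℚ) H]
    (T : Module.Basis W (Polynomial ℚ) H)
    (hmul : ∀ w w' : W, cs.length (w * w') = cs.length w + cs.length w' →
      T w * T w' = T (w * w'))
    (hquad : ∀ i : B, (T (cs.simple i) + 1) * (T (cs.simple i) - algebraMap (Polynomial ℚ) H X) = 0)
    (a a' b : W)
    (h : (T.repr (T a * T a') b).coeff (cs.length a) ≠ 0) :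
    (a' = b ∧ ∀ i ∈ cs.support a, cs.IsLeftDescent a' i) ∨ cs.length b < cs.length a' := by
  have hT : cs.IsHeckeBasis X T := ⟨hmul, hquad⟩
  have key : ∀ l, cs.IsReduced l → cs.wordProd l = a →
      cs.length b < cs.length a' ∨ (a' = b ∧ ∀ j ∈ l, cs.IsLeftDescent a' j) := by
    rintro l hl rfl
    exact hT.lt_or_eq_and_isLeftDescent_of_coeff_length_ne_zero hl (hl.eq ▸ h)
  refine or_iff_not_imp_right.mpr fun hlt => ?_
  obtain ⟨l, hl, rfl⟩ := cs.exists_isReduced a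
  refine ⟨((key l hl rfl).resolve_left hlt).1, ?_⟩
  rintro j ⟨l', hl', hw, hj⟩
  exact ((key l' hl' hw).resolve_left hlt).2 j hj

/-- if the coefficient of `q^{ℓ(a)}` in the structure constant `φ(a,a',b)`
is nonzero, then either `a' = b` and the support of `a` lies in the left descent set of
`a'`, or `ℓ(b) < ℓ(a')`. -/
theorem hecke_structure_constant_leading_coeff_ne_zero
    {B W : Type} [Group W] [Finite W] {M : CoxeterMatrix B} (cs : CoxeterSystem M W)
    (H : Type) [Ring H] [Algebra (Polynomial ℚ) H]
    (T : Module.Basis W (Polynomial ℚ) H)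
    (hone : T 1 = 1)
    (hmul : ∀ w w' : W, cs.length (w * w') = cs.length w + cs.length w' →
      T w * T w' = T (w * w'))
    (hquad : ∀ i : B, (T (cs.simple i) + 1) * (T (cs.simple i) - algebraMap (Polynomial ℚ) H X) = 0)
    (a a' b : W)
    (h : (T.repr (T a * T a') b).coeff (cs.length a) ≠ 0) :
    (a' = b ∧ ∀ i ∈ cs.support a, cs.IsLeftDescent a' i) ∨ cs.length b < cs.length a' :=
  hecke_structure_constant_leading_coeff_ne_zero_general cs H T hmul hquad a a' b h
end

section
/- With notation as above, if a'=b and every simple reflection occurring in a reduced expression of a lies in the left descent set of a', then the coefficient of q^{ℓ(a)} in φ(a,a',b) equals 1. -/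
open Polynomial

/-!
Give the monomial `q ^ k • T x` the weight `k + ℓ(x)`; left multiplication by `T s` raises
weights by at most one. If every letter of a reduced word `s₁ ⋯ sₙ` for `a` is a left descent
of `a'`, peeling off the letters one at a time shows `T a * T a' ≡ q ^ n • T a'` modulo weights
`< n + ℓ(a')`, because in `T s * T a' = (q - 1) • T a' + q • T (s a')` only `q • T a'` has top
weight. The coefficient of `q ^ n` at `T a'` is therefore `1`.
-/

namespace Hecke

variable {B W : Type*} [Group W] {M : CoxeterMatrix B} (cs : CoxeterSystem M W)
  {R : Type*} [CommRing R] {H : Type*} [Ring H] [Algebra R[X] H] (T : Module.Basis W R[X] H)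

theorem simple_mul_self
    (hquad : ∀ i : B, (T (cs.simple i) + 1) * (T (cs.simple i) - algebraMap R[X] H X) = 0)
    (i : B) :
    T (cs.simple i) * T (cs.simple i) = (X - 1 : R[X]) • T (cs.simple i) + (X : R[X]) • 1 := by
  have h := hquad i
  simp only [Algebra.algebraMap_eq_smul_one, add_mul, mul_sub, one_mul, mul_smul_comm,
    mul_one] at h
  linear_combination (norm := module) h

theorem simple_mul_of_not_isLeftDescent
    (hmul : ∀ w w' : W, cs.length (w * w') = cs.length w + cs.length w' →
      T w * T w' = T (w * w'))
    {w : W} {i : B} (hw : ¬ cs.IsLeftDescent w i) :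
    T (cs.simple i) * T w = T (cs.simple i * w) :=
  hmul _ _ (by rw [cs.length_simple, cs.not_isLeftDescent_iff.mp hw, add_comm])

theorem simple_mul_of_isLeftDescent
    (hmul : ∀ w w' : W, cs.length (w * w') = cs.length w + cs.length w' →
      T w * T w' = T (w * w'))
    (hquad : ∀ i : B, (T (cs.simple i) + 1) * (T (cs.simple i) - algebraMap R[X] H X) = 0)
    {w : W} {i : B} (hw : cs.IsLeftDescent w i) :
    T (cs.simple i) * T w = (X - 1 : R[X]) • T w + (X : R[X]) • T (cs.simple i * w) := by
  have hsw : ¬ cs.IsLeftDescent (cs.simple i * w) i :=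
    cs.isLeftDescent_iff_not_isLeftDescent_mul.mp hw
  have hw_eq : T w = T (cs.simple i) * T (cs.simple i * w) := by
    rw [simple_mul_of_not_isLeftDescent cs T hmul hsw, cs.simple_mul_simple_cancel_left]
  conv_lhs => rw [hw_eq, ← mul_assoc, simple_mul_self cs T hquad, add_mul, smul_mul_assoc,
    smul_mul_assoc, one_mul, ← hw_eq]

def weightLT (d : ℕ) : AddSubgroup H :=
  AddSubgroup.closure {h | ∃ k x, k + cs.length x < d ∧ (X ^ k : R[X]) • T x = h}

theorem monomial_mem_weightLT {d k : ℕ} {x : W} (h : k + cs.length x < d) :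
    (X ^ k : R[X]) • T x ∈ weightLT cs T d :=
  AddSubgroup.subset_closure ⟨k, x, h, rfl⟩

theorem coeff_repr_eq_zero_of_mem_weightLT {d m : ℕ} {h : H} (hh : h ∈ weightLT cs T d)
    {b : W} (hb : d ≤ m + cs.length b) : (T.repr h b).coeff m = 0 := by
  induction hh using AddSubgroup.closure_induction with
  | mem h hh =>
    obtain ⟨k, x, hk, rfl⟩ := hh
    rw [map_smul, T.repr_self, Finsupp.smul_apply, smul_eq_mul]
    by_cases hxb : x = b
    · subst hxb
      rw [Finsupp.single_eq_same, mul_one, coeff_X_pow, if_neg (by omega)]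
    · rw [Finsupp.single_eq_of_ne (Ne.symm hxb), mul_zero, coeff_zero]
  | zero => simp
  | add h h' _ _ ih ih' => simp [ih, ih']
  | neg h _ ih => simp [ih]

theorem simple_mul_mem_weightLT
    (hmul : ∀ w w' : W, cs.length (w * w') = cs.length w + cs.length w' →
      T w * T w' = T (w * w'))
    (hquad : ∀ i : B, (T (cs.simple i) + 1) * (T (cs.simple i) - algebraMap R[X] H X) = 0)
    {d : ℕ} {h : H} (hh : h ∈ weightLT cs T d) (i : B) :
    T (cs.simple i) * h ∈ weightLT cs T (d + 1) := by
  induction hh using AddSubgroup.closure_induction with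
  | mem h hh =>
    obtain ⟨k, x, hk, rfl⟩ := hh
    rw [mul_smul_comm]
    by_cases hx : cs.IsLeftDescent x i
    · have hlen := cs.isLeftDescent_iff.mp hx
      have hexp : (X ^ k : R[X]) • ((X - 1 : R[X]) • T x + (X : R[X]) • T (cs.simple i * x))
          = (X ^ (k + 1) : R[X]) • T x - (X ^ k : R[X]) • T x
            + (X ^ (k + 1) : R[X]) • T (cs.simple i * x) := by
        module
      rw [simple_mul_of_isLeftDescent cs T hmul hquad hx, hexp]
      exact add_mem (sub_mem (monomial_mem_weightLT cs T (by omega))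
        (monomial_mem_weightLT cs T (by omega))) (monomial_mem_weightLT cs T (by omega))
    · have hlen := cs.not_isLeftDescent_iff.mp hx
      rw [simple_mul_of_not_isLeftDescent cs T hmul hx]
      exact monomial_mem_weightLT cs T (by omega)
  | zero => simp only [mul_zero, zero_mem]
  | add h h' _ _ ih ih' => simpa only [mul_add] using add_mem ih ih'
  | neg h _ ih => simpa only [mul_neg] using neg_mem ih

theorem wordProd_mul_sub_X_pow_smul_mem_weightLT
    (hmul : ∀ w w' : W, cs.length (w * w') = cs.length w + cs.length w' →
      T w * T w' = T (w * w'))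
    (hquad : ∀ i : B, (T (cs.simple i) + 1) * (T (cs.simple i) - algebraMap R[X] H X) = 0)
    {w : W} {l : List B} (hl : cs.IsReduced l) (hdesc : ∀ i ∈ l, cs.IsLeftDescent w i) :
    T (cs.wordProd l) * T w - (X ^ l.length : R[X]) • T w ∈
      weightLT cs T (l.length + cs.length w) := by
  induction l with
  | nil =>
    rw [cs.wordProd_nil, hmul 1 w (by simp), one_mul, List.length_nil, pow_zero, one_smul,
      sub_self]
    exact zero_mem _
  | cons i l ih =>
    have hl' : cs.IsReduced l := by simpa using hl.drop 1
    set g := T (cs.wordProd l) * T w - (X ^ l.length : R[X]) • T w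
    have hg : g ∈ weightLT cs T (l.length + cs.length w) :=
      ih hl' fun j hj => hdesc j (List.mem_cons_of_mem i hj)
    have hi := hdesc i List.mem_cons_self
    have hlen := cs.isLeftDescent_iff.mp hi
    have hcons : T (cs.wordProd (i :: l)) = T (cs.simple i) * T (cs.wordProd l) := by
      rw [cs.wordProd_cons]
      refine (hmul _ _ ?_).symm
      rw [← cs.wordProd_cons, hl.eq, hl'.eq, cs.length_simple, List.length_cons, add_comm]
    have hexp : T (cs.wordProd (i :: l)) * T w - (X ^ (i :: l).length : R[X]) • T w
        = T (cs.simple i) * g + ((X ^ (l.length + 1) : R[X]) • T (cs.simple i * w)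
          - (X ^ l.length : R[X]) • T w) := by
      rw [hcons, mul_sub, mul_assoc, mul_smul_comm,
        simple_mul_of_isLeftDescent cs T hmul hquad hi, List.length_cons]
      module
    rw [hexp, List.length_cons, add_right_comm]
    exact add_mem (simple_mul_mem_weightLT cs T hmul hquad hg i)
      (sub_mem (monomial_mem_weightLT cs T (by omega)) (monomial_mem_weightLT cs T (by omega)))

end Hecke

theorem hecke_structure_constant_leading_coeff_eq_one_general
    {B W : Type} [Group W] {M : CoxeterMatrix B} (cs : CoxeterSystem M W)
    (H : Type) [Ring H] [Algebra (Polynomial ℚ) H]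
    (T : Module.Basis W (Polynomial ℚ) H)
    (hmul : ∀ w w' : W, cs.length (w * w') = cs.length w + cs.length w' →
      T w * T w' = T (w * w'))
    (hquad : ∀ i : B, (T (cs.simple i) + 1) * (T (cs.simple i) - algebraMap (Polynomial ℚ) H X) = 0)
    (a a' b : W)
    (heq : a' = b)
    (hsupp : ∀ i ∈ cs.support a, cs.IsLeftDescent a' i) :
    (T.repr (T a * T a') b).coeff (cs.length a) = 1 := by
  subst heq
  obtain ⟨l, hl, rfl⟩ := cs.exists_isReduced a
  have hlead := Hecke.wordProd_mul_sub_X_pow_smul_mem_weightLT cs T hmul hquad hl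
    fun i hi => hsupp i ⟨l, hl, rfl, hi⟩
  rw [hl.eq, ← sub_add_cancel (T (cs.wordProd l) * T a') ((X ^ l.length : ℚ[X]) • T a'),
    map_add, Finsupp.add_apply, coeff_add,
    Hecke.coeff_repr_eq_zero_of_mem_weightLT cs T hlead le_rfl]
  simp

/-- if `a' = b` and the support of `a` is contained in the left descent set
of `a'`, then the coefficient of `q^{ℓ(a)}` in `φ(a,a',b)` equals `1`. -/
theorem hecke_structure_constant_leading_coeff_eq_one
    {B W : Type} [Group W] [Finite W] {M : CoxeterMatrix B} (cs : CoxeterSystem M W)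
    (H : Type) [Ring H] [Algebra (Polynomial ℚ) H]
    (T : Module.Basis W (Polynomial ℚ) H)
    (hone : T 1 = 1)
    (hmul : ∀ w w' : W, cs.length (w * w') = cs.length w + cs.length w' →
      T w * T w' = T (w * w'))
    (hquad : ∀ i : B, (T (cs.simple i) + 1) * (T (cs.simple i) - algebraMap (Polynomial ℚ) H X) = 0)
    (a a' b : W)
    (heq : a' = b)
    (hsupp : ∀ i ∈ cs.support a, cs.IsLeftDescent a' i) :
    (T.repr (T a * T a') b).coeff (cs.length a) = 1 :=
  hecke_structure_constant_leading_coeff_eq_one_general cs H T hmul hquad a a' b heq hsupp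
end

section
/- Let w, w' ∈ W with n = ℓ(w)+ℓ(w'), and suppose that the support of w equals the full set S of simple reflections, or the support of w' equals S. Then the coefficient of q^n in N^{w,w'} equals 1. -/
/-!
Multiplying by `T s` on the left sends the `T y`-coordinate `c y` to `(q - 1) c y + c (s y)` when
`s y < y` and to `q c (s y)` otherwise, and similarly on the right. Tracking degrees along reduced
words shows that the `T x`-coordinate of `T w T x T w'⁻¹` is a polynomial of degree at most
`ℓ w + ℓ w'` whose top coefficient is `1` if every letter of `w` is a left descent of `x` and every
letter of `w'⁻¹` a right descent of `x`, and `0` otherwise. Summing over `x`, the coefficient of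
`q ^ n` in `N` counts these `x`; if one of the supports is all of `S`, such an `x` has all left or
all right descents, so it is the longest element. Its uniqueness comes from the sign
representation of `W` on `W × {±1}`: if `x` has all right descents then
`ℓ (x u⁻¹) + ℓ u = ℓ x` for every `u`.
-/

open Polynomial

theorem LinearMap.trace_eq_sum_repr {R M ι : Type*} [CommSemiring R] [AddCommMonoid M]
    [Module R M] [Fintype ι] (b : Module.Basis ι R M) (f : M →ₗ[R] M) :
    LinearMap.trace R M f = ∑ i, b.repr (f (b i)) i := by
  classical
  rw [LinearMap.trace_eq_matrix_trace R b, Matrix.trace]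
  simp [LinearMap.toMatrix_apply]

section DescentStep

variable {α R : Type*} [CommRing R]

open scoped Classical in
/-- With `D y` read as "`s` is a descent of `y`" and `σ y` as `s y`, this is how multiplication by
`T s` acts on polynomial coordinates `P`; see `IsHeckeBasis.repr_simple_mul`. -/
noncomputable def descentStep (D : α → Prop) (σ : α → α) (P : α → R[X]) (y : α) : R[X] :=
  if D y then (X - 1) * P y + P (σ y) else X * P (σ y)

/-- The degree of `P y` is at most `m + ℓ x - ℓ y`, and strictly smaller when `ℓ y < ℓ x`. -/
def CoeffBound (ℓ : α → ℕ) (m : ℕ) (x : α) (P : α → R[X]) : Prop :=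
  ∀ y k, m + ℓ x < k + ℓ y ∨ ℓ y < ℓ x ∧ m + ℓ x ≤ k + ℓ y → (P y).coeff k = 0

variable {ℓ : α → ℕ} {D : α → Prop} {σ : α → α} {m : ℕ} {x : α} {P : α → R[X]}

theorem coeff_X_sub_one_mul_succ (p : R[X]) (k : ℕ) :
    ((X - 1) * p).coeff (k + 1) = p.coeff k - p.coeff (k + 1) := by
  rw [sub_mul, one_mul, coeff_sub, coeff_X_mul]

theorem CoeffBound.descentStep (hD : ∀ y, D y → ℓ (σ y) + 1 = ℓ y)
    (hnD : ∀ y, ¬ D y → ℓ (σ y) = ℓ y + 1) (hP : CoeffBound ℓ m x P) :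
    CoeffBound ℓ (m + 1) x (descentStep D σ P) := by
  intro y k hk
  by_cases hy : D y
  · have := hD y hy
    rcases k with _ | k
    · simp [_root_.descentStep, hy, hP y 0 (by omega), hP (σ y) 0 (by omega)]
    · rw [_root_.descentStep, if_pos hy, coeff_add, coeff_X_sub_one_mul_succ,
        hP y k (by omega), hP y (k + 1) (by omega), hP (σ y) (k + 1) (by omega)]
      simp
  · have := hnD y hy
    rcases k with _ | k
    · simp [_root_.descentStep, hy]
    · rw [_root_.descentStep, if_neg hy, coeff_X_mul, hP (σ y) k (by omega)]

open scoped Classical in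
theorem CoeffBound.coeff_descentStep (hD : ∀ y, D y → ℓ (σ y) + 1 = ℓ y)
    (hnD : ∀ y, ¬ D y → ℓ (σ y) = ℓ y + 1) (hP : CoeffBound ℓ m x P) :
    (_root_.descentStep D σ P x).coeff (m + 1) = if D x then (P x).coeff m else 0 := by
  by_cases hx : D x
  · have := hD x hx
    rw [_root_.descentStep, if_pos hx, if_pos hx, coeff_add, coeff_X_sub_one_mul_succ,
      hP x (m + 1) (by omega), hP (σ x) (m + 1) (by omega), sub_zero, add_zero]
  · have := hnD x hx
    rw [_root_.descentStep, if_neg hx, if_neg hx, coeff_X_mul, hP (σ x) m (by omega)]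

end DescentStep

namespace CoxeterSystem

section

variable {B W : Type*} [Group W] {M : CoxeterMatrix B} (cs : CoxeterSystem M W)

local prefix:100 "s " => cs.simple
local prefix:100 "ℓ " => cs.length

theorem simple_mul_simple_mul_simple_pow (i j : B) (n : ℕ) :
    s j * (s i * s j) ^ n = ((s i * s j) ^ n)⁻¹ * s j := by
  have h : MulAut.conj (s j) (s i * s j) = (s i * s j)⁻¹ := by
    simp [mul_assoc, cs.inv_simple]
  calc s j * (s i * s j) ^ n = MulAut.conj (s j) ((s i * s j) ^ n) * s j := by
        rw [MulAut.conj_apply, inv_mul_cancel_right]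
    _ = ((s i * s j) ^ n)⁻¹ * s j := by rw [map_pow, h, inv_pow]

theorem simple_mul_mul_simple_eq_iff (i : B) (u v : W) :
    s i * u * s i = v ↔ u = s i * v * s i := by
  constructor <;> rintro rfl <;> simp [mul_assoc]

open scoped Classical in
noncomputable def signAction (i : B) : Function.End (W × ℤˣ) :=
  fun p => (s i * p.1 * s i, (if p.1 = s i then -1 else 1) * p.2)

open scoped Classical in
theorem signAction_mul_pow_apply (i j : B) (k : ℕ) (t : W) (ε : ℤˣ) :
    ((cs.signAction i * cs.signAction j) ^ k) (t, ε) =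
      ((s i * s j) ^ k * t * ((s i * s j) ^ k)⁻¹,
        (∏ r ∈ Finset.range (2 * k), if (s i * s j) ^ r * t = s j then -1 else 1) * ε) := by
  have hc := cs.simple_mul_simple_mul_simple_pow i j
  induction k with
  | zero =>
    simp only [pow_zero, one_mul, inv_one, mul_one, mul_zero, Finset.range_zero,
      Finset.prod_empty]
    rfl
  | succ k ih =>
    rw [pow_succ']
    show cs.signAction i (cs.signAction j (((cs.signAction i * cs.signAction j) ^ k) (t, ε))) =
      _
    rw [ih]
    set c := s i * s j
    -- conjugating by powers of `c`, the two sign flips of this step happen iff `c ^ r * t = s j`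
    -- for `r = 2 k` and `r = 2 k + 1` respectively
    have h₁ : c ^ k * t * (c ^ k)⁻¹ = s j ↔ c ^ (2 * k) * t = s j := by
      rw [mul_inv_eq_iff_eq_mul, hc, eq_inv_mul_iff_mul_eq, ← mul_assoc, ← pow_add, ← two_mul]
    have h₂ : s j * (c ^ k * t * (c ^ k)⁻¹) * s j = s i ↔ c ^ (2 * k + 1) * t = s j := by
      rw [cs.simple_mul_mul_simple_eq_iff, mul_assoc (s j), mul_inv_eq_iff_eq_mul, mul_assoc,
        ← pow_succ', hc, eq_inv_mul_iff_mul_eq, ← mul_assoc, ← pow_add,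
        show k + 1 + k = 2 * k + 1 by ring]
    simp only [signAction, Prod.mk.injEq, h₁, h₂]
    constructor
    · have hconj (u : W) : s i * (s j * u * s j) * s i = c * u * c⁻¹ := by
        simp only [c, mul_inv_rev, cs.inv_simple, mul_assoc]
      rw [hconj, pow_succ']
      group
    · rw [show 2 * (k + 1) = 2 * k + 1 + 1 by ring, Finset.prod_range_succ,
        Finset.prod_range_succ]
      ac_rfl

theorem isLiftable_signAction : M.IsLiftable cs.signAction := by
  intro i j
  refine funext fun ⟨t, ε⟩ => ?_
  have hc := cs.simple_mul_simple_pow i j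
  generalize M i j = m at hc ⊢
  have hperiod (r : ℕ) : (s i * s j) ^ (m + r) = (s i * s j) ^ r := by
    rw [pow_add, hc, one_mul]
  rw [signAction_mul_pow_apply, hc, two_mul, Finset.prod_range_add]
  show _ = (t, ε)
  classical
  simp only [hperiod, Int.units_mul_self, one_mul, inv_one, mul_one]

noncomputable def signRep : W →* Function.End (W × ℤˣ) :=
  cs.lift ⟨cs.signAction, cs.isLiftable_signAction⟩

theorem signRep_simple (i : B) : cs.signRep (s i) = cs.signAction i :=
  cs.lift_apply_simple cs.isLiftable_signAction i

noncomputable def inversionSign (w t : W) : ℤˣ := (cs.signRep w (t, 1)).2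

open scoped Classical in
theorem inversionSign_simple (i : B) (t : W) :
    cs.inversionSign (s i) t = if t = s i then -1 else 1 := by
  simp [inversionSign, signRep_simple, signAction]

theorem signRep_apply (w t : W) (ε : ℤˣ) :
    cs.signRep w (t, ε) = (w * t * w⁻¹, cs.inversionSign w t * ε) := by
  induction w using cs.simple_induction_left generalizing ε with
  | one =>
    simp only [inversionSign, map_one]
    show (t, ε) = (1 * t * 1⁻¹, (1 : ℤˣ) * ε)
    simp
  | mul_simple_left w i ih =>
    simp only [inversionSign, map_mul, signRep_simple]
    show cs.signAction i (cs.signRep w (t, ε)) = (_, (cs.signAction i (cs.signRep w (t, 1))).2 * ε)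
    rw [ih, ih]
    simp [signAction, mul_assoc, cs.inv_simple]

theorem inversionSign_mul (u v t : W) :
    cs.inversionSign (u * v) t = cs.inversionSign u (v * t * v⁻¹) * cs.inversionSign v t := by
  rw [inversionSign, map_mul]
  show (cs.signRep u (cs.signRep v (t, 1))).2 = _
  rw [signRep_apply, signRep_apply, mul_one]

theorem length_mul_lt_of_inversionSign_eq_neg_one {w t : W} (h : cs.inversionSign w t = -1) :
    ℓ (w * t) < ℓ w := by
  induction hn : ℓ w generalizing w with
  | zero =>
    rw [cs.length_eq_zero_iff] at hn
    subst hn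
    rw [inversionSign, map_one] at h
    change (1 : ℤˣ) = -1 at h
    exact absurd h (by decide)
  | succ n ih =>
    obtain ⟨i, hi⟩ := cs.exists_leftDescent_of_ne_one (w := w) (by rintro rfl; simp at hn)
    obtain ⟨w, rfl⟩ : ∃ w', w = s i * w' :=
      ⟨s i * w, (cs.simple_mul_simple_cancel_left i).symm⟩
    have hlen : ℓ w = n := by
      have := cs.isLeftDescent_iff.mp hi
      rw [cs.simple_mul_simple_cancel_left] at this
      omega
    -- `η(s w, t) = η(s, w t w⁻¹) η(w, t)`: either `w t w⁻¹ = s`, so that `s w t = w`,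
    -- or `η(w, t) = -1` and induction applies to `w`
    rw [inversionSign_mul, inversionSign_simple] at h
    by_cases hti : w * t * w⁻¹ = s i
    · rw [mul_assoc, show w * t = s i * w by rw [← hti]; group, cs.simple_mul_simple_cancel_left]
      omega
    · rw [if_neg hti, one_mul] at h
      have hlt := ih h hlen
      have hle := cs.length_mul_le (s i) (w * t)
      rw [cs.length_simple, ← mul_assoc] at hle
      omega

theorem inversionSign_simple_of_not_isRightDescent {w : W} {i : B}
    (h : ¬ cs.IsRightDescent w i) : cs.inversionSign w (s i) = 1 :=
  (Int.units_eq_one_or _).resolve_right fun h' =>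
    h (cs.length_mul_lt_of_inversionSign_eq_neg_one h')

theorem inversionSign_simple_of_isRightDescent {w : W} {i : B} (h : cs.IsRightDescent w i) :
    cs.inversionSign w (s i) = -1 := by
  have h' := cs.inversionSign_simple_of_not_isRightDescent
    (cs.isRightDescent_iff_not_isRightDescent_mul.mp h)
  rw [← cs.simple_mul_simple_cancel_right (w := w) i, inversionSign_mul, cs.inv_simple,
    cs.simple_mul_simple_cancel_right, inversionSign_simple, if_pos rfl, h', one_mul]

theorem length_mul_inv_add_length_of_forall_isRightDescent {x : W}
    (hx : ∀ i, cs.IsRightDescent x i) (u : W) : ℓ (x * u⁻¹) + ℓ u = ℓ x := by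
  induction hn : ℓ u generalizing u with
  | zero => simp [cs.length_eq_zero_iff.mp hn]
  | succ n ih =>
    obtain ⟨i, hi⟩ := cs.exists_rightDescent_of_ne_one (w := u) (by rintro rfl; simp at hn)
    obtain ⟨u, rfl⟩ : ∃ u', u = u' * s i :=
      ⟨u * s i, (cs.simple_mul_simple_cancel_right i).symm⟩
    have hlen : ℓ u = n := by
      have := cs.isRightDescent_iff.mp hi
      rw [cs.simple_mul_simple_cancel_right] at this
      omega
    have hu : ¬ cs.IsRightDescent u i := by
      simpa only [cs.simple_mul_simple_cancel_right]
        using cs.isRightDescent_iff_not_isRightDescent_mul.mp hi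
    -- `x (u s)⁻¹ = (x u⁻¹) t` for `t = u s u⁻¹`, whose sign is read off from `x = (x u⁻¹) u`
    have hsign : cs.inversionSign (x * u⁻¹) (u * s i * u⁻¹) = -1 := by
      have h := cs.inversionSign_simple_of_isRightDescent (hx i)
      rwa [← inv_mul_cancel_right x u, inversionSign_mul,
        cs.inversionSign_simple_of_not_isRightDescent hu, mul_one] at h
    have hlt := cs.length_mul_lt_of_inversionSign_eq_neg_one hsign
    have hle := cs.length_le_length_mul_add_right x (u * s i)⁻¹
    rw [show x * u⁻¹ * (u * s i * u⁻¹) = x * (u * s i)⁻¹ by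
      rw [mul_inv_rev, cs.inv_simple]; group] at hlt
    rw [cs.length_inv] at hle
    have := ih u hlen
    omega

theorem eq_of_forall_isRightDescent {x y : W} (hx : ∀ i, cs.IsRightDescent x i)
    (hy : ∀ i, cs.IsRightDescent y i) : x = y := by
  have hxy := cs.length_mul_inv_add_length_of_forall_isRightDescent hx y
  have hyx := cs.length_mul_inv_add_length_of_forall_isRightDescent hy x
  rw [← cs.length_inv (y * x⁻¹), mul_inv_rev, inv_inv] at hyx
  exact mul_inv_eq_one.mp (cs.length_eq_zero_iff.mp (by omega))

theorem eq_of_forall_isLeftDescent {x y : W} (hx : ∀ i, cs.IsLeftDescent x i)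
    (hy : ∀ i, cs.IsLeftDescent y i) : x = y :=
  inv_injective <| cs.eq_of_forall_isRightDescent (fun i => cs.isRightDescent_inv_iff.mpr (hx i))
    (fun i => cs.isRightDescent_inv_iff.mpr (hy i))

theorem exists_forall_isLeftDescent_and_isRightDescent [Finite W] :
    ∃ x : W, (∀ i, cs.IsLeftDescent x i) ∧ ∀ i, cs.IsRightDescent x i := by
  obtain ⟨x, hx⟩ := Finite.exists_max cs.length
  exact ⟨x, fun i => (hx _).lt_of_ne (cs.length_simple_mul_ne x i),
    fun i => (hx _).lt_of_ne (cs.length_mul_simple_ne x i)⟩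

section Hecke

open scoped Classical

variable {K H : Type*} [Field K] [Ring H] [Algebra (RatFunc K) H]

local notation "𝕢" => (RatFunc.X : RatFunc K)

structure IsHeckeBasis_s7 (T : Module.Basis W (RatFunc K) H) : Prop where
  one : T 1 = 1
  mul_of_length_add : ∀ w w', ℓ (w * w') = ℓ w + ℓ w' → T w * T w' = T (w * w')
  quadratic : ∀ i, (T (s i) + 1) * (T (s i) - algebraMap (RatFunc K) H 𝕢) = 0

variable {cs} {T : Module.Basis W (RatFunc K) H} (hT : cs.IsHeckeBasis_s7 T)
include hT

namespace IsHeckeBasis_s7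

theorem simple_mul_self (i : B) : T (s i) * T (s i) = (𝕢 - 1) • T (s i) + 𝕢 • 1 := by
  have h := hT.quadratic i
  rw [Algebra.algebraMap_eq_smul_one] at h
  calc T (s i) * T (s i)
        = (T (s i) + 1) * (T (s i) - 𝕢 • 1) + ((𝕢 - 1) • T (s i) + 𝕢 • 1) := by
        simp only [add_mul, mul_sub, one_mul, mul_smul_comm, mul_one, smul_add, sub_smul,
          one_smul]
        abel
    _ = (𝕢 - 1) • T (s i) + 𝕢 • 1 := by rw [h, zero_add]

theorem simple_mul (i : B) (x : W) :
    T (s i) * T x =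
      if cs.IsLeftDescent x i then 𝕢 • T (s i * x) + (𝕢 - 1) • T x else T (s i * x) := by
  split_ifs with hx
  · have hlen := cs.isLeftDescent_iff.mp hx
    have h : T (s i) * T (s i * x) = T x := by
      rw [hT.mul_of_length_add _ _ (by
        rw [cs.simple_mul_simple_cancel_left, cs.length_simple]; omega),
        cs.simple_mul_simple_cancel_left]
    rw [← h, ← mul_assoc, hT.simple_mul_self, add_mul, smul_mul_assoc, smul_mul_assoc, one_mul,
      h, add_comm]
  · exact hT.mul_of_length_add _ _ (by
      rw [cs.not_isLeftDescent_iff.mp hx, cs.length_simple]; omega)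

theorem mul_simple (i : B) (x : W) :
    T x * T (s i) =
      if cs.IsRightDescent x i then 𝕢 • T (x * s i) + (𝕢 - 1) • T x else T (x * s i) := by
  split_ifs with hx
  · have hlen := cs.isRightDescent_iff.mp hx
    have h : T (x * s i) * T (s i) = T x := by
      rw [hT.mul_of_length_add _ _ (by
        rw [cs.simple_mul_simple_cancel_right, cs.length_simple]; omega),
        cs.simple_mul_simple_cancel_right]
    rw [← h, mul_assoc, hT.simple_mul_self, mul_add, mul_smul_comm, mul_smul_comm, mul_one, h,
      add_comm]
  · exact hT.mul_of_length_add _ _ (by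
      rw [cs.not_isRightDescent_iff.mp hx, cs.length_simple])

theorem repr_simple_mul (i : B) (h : H) (y : W) :
    T.repr (T (s i) * h) y =
      if cs.IsLeftDescent y i then (𝕢 - 1) * T.repr h y + T.repr h (s i * y)
      else 𝕢 * T.repr h (s i * y) := by
  have hsy : s i * y ≠ y := fun h => cs.length_simple_mul_ne y i (congrArg cs.length h)
  have hflip : cs.IsLeftDescent (s i * y) i ↔ ¬ cs.IsLeftDescent y i := by
    rw [cs.isLeftDescent_iff_not_isLeftDescent_mul (w := s i * y),
      cs.simple_mul_simple_cancel_left]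
  have hbasis (z : W) : T.repr (T (s i) * T z) y =
      if cs.IsLeftDescent y i then (𝕢 - 1) * T.repr (T z) y + T.repr (T z) (s i * y)
      else 𝕢 * T.repr (T z) (s i * y) := by
    rw [hT.simple_mul]
    rcases eq_or_ne z y with rfl | hzy
    · by_cases hz : cs.IsLeftDescent z i <;> simp [hz, hsy, hsy.symm]
    rcases eq_or_ne z (s i * y) with rfl | hzsy
    · by_cases hy : cs.IsLeftDescent y i <;>
        simp [hy, hflip, hsy.symm, cs.simple_mul_simple_cancel_left]
    · have : s i * z ≠ y := fun h => hzsy (by rw [← h, cs.simple_mul_simple_cancel_left])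
      split_ifs <;> simp [hzy, hzsy, this]
  -- both sides are linear in `h`, so it suffices to compare them on the basis
  split_ifs with hy
  · have := LinearMap.congr_fun (T.ext
      (f₁ := T.coord y ∘ₗ LinearMap.mulLeft (RatFunc K) (T (s i)))
      (f₂ := (𝕢 - 1) • T.coord y + T.coord (s i * y)) fun z => by simpa [hy] using hbasis z) h
    simpa using this
  · have := LinearMap.congr_fun (T.ext
      (f₁ := T.coord y ∘ₗ LinearMap.mulLeft (RatFunc K) (T (s i)))
      (f₂ := 𝕢 • T.coord (s i * y)) fun z => by simpa [hy] using hbasis z) h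
    simpa using this

theorem repr_mul_simple (i : B) (h : H) (y : W) :
    T.repr (h * T (s i)) y =
      if cs.IsRightDescent y i then (𝕢 - 1) * T.repr h y + T.repr h (y * s i)
      else 𝕢 * T.repr h (y * s i) := by
  have hsy : y * s i ≠ y := fun h => cs.length_mul_simple_ne y i (congrArg cs.length h)
  have hflip : cs.IsRightDescent (y * s i) i ↔ ¬ cs.IsRightDescent y i := by
    rw [cs.isRightDescent_iff_not_isRightDescent_mul (w := y * s i),
      cs.simple_mul_simple_cancel_right]
  have hbasis (z : W) : T.repr (T z * T (s i)) y =
      if cs.IsRightDescent y i then (𝕢 - 1) * T.repr (T z) y + T.repr (T z) (y * s i)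
      else 𝕢 * T.repr (T z) (y * s i) := by
    rw [hT.mul_simple]
    rcases eq_or_ne z y with rfl | hzy
    · by_cases hz : cs.IsRightDescent z i <;> simp [hz, hsy, hsy.symm]
    rcases eq_or_ne z (y * s i) with rfl | hzsy
    · by_cases hy : cs.IsRightDescent y i <;>
        simp [hy, hflip, hsy.symm, cs.simple_mul_simple_cancel_right]
    · have : z * s i ≠ y := fun h => hzsy (by rw [← h, cs.simple_mul_simple_cancel_right])
      split_ifs <;> simp [hzy, hzsy, this]
  -- both sides are linear in `h`, so it suffices to compare them on the basis
  split_ifs with hy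
  · have := LinearMap.congr_fun (T.ext
      (f₁ := T.coord y ∘ₗ LinearMap.mulRight (RatFunc K) (T (s i)))
      (f₂ := (𝕢 - 1) • T.coord y + T.coord (y * s i)) fun z => by simpa [hy] using hbasis z) h
    simpa using this
  · have := LinearMap.congr_fun (T.ext
      (f₁ := T.coord y ∘ₗ LinearMap.mulRight (RatFunc K) (T (s i)))
      (f₂ := 𝕢 • T.coord (y * s i)) fun z => by simpa [hy] using hbasis z) h
    simpa using this

theorem apply_wordProd (ω : List B) (hω : cs.IsReduced ω) :
    T (cs.wordProd ω) = (ω.map fun i => T (s i)).prod := by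
  induction ω with
  | nil => simp [hT.one]
  | cons i ω ih =>
    have hω' : cs.IsReduced ω := by simpa using hω.drop 1
    rw [List.map_cons, List.prod_cons, ← ih hω', cs.wordProd_cons, hT.mul_of_length_add]
    have : ℓ (cs.wordProd (i :: ω)) = ω.length + 1 := hω
    rw [cs.wordProd_cons] at this
    rw [this, cs.length_simple, hω'.eq]
    omega

end IsHeckeBasis_s7

variable (T) in
def HasTopCoeff (m : ℕ) (x : W) (b : K) (h : H) : Prop :=
  ∃ P : W → K[X], (∀ y, T.repr h y = algebraMap K[X] (RatFunc K) (P y)) ∧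
    CoeffBound cs.length m x P ∧ (P x).coeff m = b

omit hT in
theorem hasTopCoeff_basis (x : W) : cs.HasTopCoeff T 0 x 1 (T x) := by
  refine ⟨fun y => if y = x then 1 else 0, fun y => ?_, fun y k hk => ?_, by simp⟩
  · by_cases hy : y = x <;> simp [hy]
  · by_cases hy : y = x
    · subst hy
      simp only [↓reduceIte, coeff_one, ite_eq_right_iff, one_ne_zero, imp_false]
      omega
    · simp [hy]

theorem HasTopCoeff.simple_mul {m : ℕ} {x : W} {b : K} {h : H} (hh : cs.HasTopCoeff T m x b h)
    (i : B) :
    cs.HasTopCoeff T (m + 1) x (if cs.IsLeftDescent x i then b else 0) (T (s i) * h) := by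
  obtain ⟨P, hrepr, hbound, htop⟩ := hh
  have hD (y : W) : cs.IsLeftDescent y i → ℓ (s i * y) + 1 = ℓ y := cs.isLeftDescent_iff.mp
  have hnD (y : W) : ¬ cs.IsLeftDescent y i → ℓ (s i * y) = ℓ y + 1 := cs.not_isLeftDescent_iff.mp
  refine ⟨descentStep (cs.IsLeftDescent · i) (s i * ·) P, fun y => ?_,
    hbound.descentStep hD hnD, by rw [hbound.coeff_descentStep hD hnD, htop]⟩
  rw [hT.repr_simple_mul, descentStep]
  split_ifs <;> simp [hrepr]

theorem HasTopCoeff.mul_simple {m : ℕ} {x : W} {b : K} {h : H} (hh : cs.HasTopCoeff T m x b h)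
    (i : B) :
    cs.HasTopCoeff T (m + 1) x (if cs.IsRightDescent x i then b else 0) (h * T (s i)) := by
  obtain ⟨P, hrepr, hbound, htop⟩ := hh
  have hD (y : W) : cs.IsRightDescent y i → ℓ (y * s i) + 1 = ℓ y := cs.isRightDescent_iff.mp
  have hnD (y : W) : ¬ cs.IsRightDescent y i → ℓ (y * s i) = ℓ y + 1 :=
    cs.not_isRightDescent_iff.mp
  refine ⟨descentStep (cs.IsRightDescent · i) (· * s i) P, fun y => ?_,
    hbound.descentStep hD hnD, by rw [hbound.coeff_descentStep hD hnD, htop]⟩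
  rw [hT.repr_mul_simple, descentStep]
  split_ifs <;> simp [hrepr]

theorem HasTopCoeff.list_prod_mul {m : ℕ} {x : W} {b : K} {h : H} (hh : cs.HasTopCoeff T m x b h)
    (ω : List B) : cs.HasTopCoeff T (m + ω.length) x
      (if ∀ i ∈ ω, cs.IsLeftDescent x i then b else 0) ((ω.map fun i => T (s i)).prod * h) := by
  induction ω with
  | nil => simpa using hh
  | cons i ω ih =>
    rw [List.map_cons, List.prod_cons, mul_assoc, List.length_cons, ← add_assoc]
    simp only [List.forall_mem_cons, ite_and]
    exact ih.simple_mul hT i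

theorem HasTopCoeff.mul_list_prod {m : ℕ} {x : W} {b : K} {h : H} (hh : cs.HasTopCoeff T m x b h)
    (ω : List B) : cs.HasTopCoeff T (m + ω.length) x
      (if ∀ i ∈ ω, cs.IsRightDescent x i then b else 0) (h * (ω.map fun i => T (s i)).prod) := by
  induction ω generalizing m b h with
  | nil => simpa using hh
  | cons i ω ih =>
    rw [List.map_cons, List.prod_cons, ← mul_assoc, List.length_cons,
      show m + (ω.length + 1) = m + 1 + ω.length by omega]
    simp only [List.forall_mem_cons, and_comm (a := cs.IsRightDescent x i), ite_and]
    exact ih (hh.mul_simple hT i)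

theorem IsHeckeBasis_s7.hasTopCoeff_wordProd_mul_mul_wordProd {ω ζ : List B} (hω : cs.IsReduced ω)
    (hζ : cs.IsReduced ζ) (x : W) :
    cs.HasTopCoeff T (ω.length + ζ.length) x
      (if (∀ i ∈ ω, cs.IsLeftDescent x i) ∧ ∀ j ∈ ζ, cs.IsRightDescent x j then 1 else 0)
      (T (cs.wordProd ω) * T x * T (cs.wordProd ζ)) := by
  rw [hT.apply_wordProd ω hω, hT.apply_wordProd ζ hζ, mul_assoc,
    show ω.length + ζ.length = 0 + ζ.length + ω.length by omega]
  simp only [ite_and]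
  exact ((hasTopCoeff_basis x).mul_list_prod hT ζ).list_prod_mul hT ω

theorem IsHeckeBasis_s7.forall_mem_isDescent_iff_of_wordProd_eq (x : W) {ω ζ ω' ζ' : List B}
    (hω : cs.IsReduced ω) (hζ : cs.IsReduced ζ) (hω' : cs.IsReduced ω') (hζ' : cs.IsReduced ζ')
    (hωω' : cs.wordProd ω = cs.wordProd ω') (hζζ' : cs.wordProd ζ = cs.wordProd ζ') :
    ((∀ i ∈ ω, cs.IsLeftDescent x i) ∧ ∀ j ∈ ζ, cs.IsRightDescent x j) ↔
      ((∀ i ∈ ω', cs.IsLeftDescent x i) ∧ ∀ j ∈ ζ', cs.IsRightDescent x j) := by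
  obtain ⟨P, hP, -, htop⟩ := hT.hasTopCoeff_wordProd_mul_mul_wordProd hω hζ x
  obtain ⟨P', hP', -, htop'⟩ := hT.hasTopCoeff_wordProd_mul_mul_wordProd hω' hζ' x
  have hlen : ω.length + ζ.length = ω'.length + ζ'.length := by
    rw [← hω.eq, ← hζ.eq, ← hω'.eq, ← hζ'.eq, hωω', hζζ']
  have hPP' : P x = P' x := RatFunc.algebraMap_injective K (by rw [← hP, ← hP', hωω', hζζ'])
  rw [hPP', hlen, htop'] at htop
  constructor <;> intro h <;> by_contra h' <;> rw [if_pos h, if_neg h'] at htop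
  · exact zero_ne_one htop
  · exact one_ne_zero htop

end Hecke

end

section Support

variable {B W : Type} [Group W] {M : CoxeterMatrix B} (cs : CoxeterSystem M W)

theorem support_inv (w : W) : cs.support w⁻¹ = cs.support w := by
  have key (w : W) : cs.support w ⊆ cs.support w⁻¹ := fun i ⟨ω, hω, hωw, hi⟩ =>
    ⟨ω.reverse, (cs.isReduced_reverse_iff ω).mpr hω, by rw [wordProd_reverse, hωw],
      List.mem_reverse.mpr hi⟩
  exact Set.Subset.antisymm (by simpa using key w⁻¹) (key w)

variable {K H : Type*} [Field K] [Ring H] [Algebra (RatFunc K) H] {cs}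
  {T : Module.Basis W (RatFunc K) H}

open scoped Classical in
theorem IsHeckeBasis_s7.exists_coeff_repr_mul_mul (hT : cs.IsHeckeBasis_s7 T) (u x v : W) :
    ∃ P : K[X], algebraMap K[X] (RatFunc K) P = T.repr (T u * T x * T v) x ∧
      P.coeff (cs.length u + cs.length v) =
        if (∀ i ∈ cs.support u, cs.IsLeftDescent x i) ∧
          ∀ j ∈ cs.support v, cs.IsRightDescent x j then 1 else 0 := by
  obtain ⟨ω, hω, rfl⟩ := cs.exists_isReduced u
  obtain ⟨ζ, hζ, rfl⟩ := cs.exists_isReduced v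
  obtain ⟨P, hP, -, htop⟩ := hT.hasTopCoeff_wordProd_mul_mul_wordProd hω hζ x
  refine ⟨P x, (hP x).symm, ?_⟩
  rw [hω.eq, hζ.eq, htop]
  refine if_congr ⟨fun h => ⟨?_, ?_⟩, fun h => ⟨?_, ?_⟩⟩ rfl rfl
  · rintro i ⟨ω', hω', hωω', hi⟩
    exact ((hT.forall_mem_isDescent_iff_of_wordProd_eq x hω hζ hω' hζ hωω'.symm rfl).mp h).1 i hi
  · rintro j ⟨ζ', hζ', hζζ', hj⟩
    exact ((hT.forall_mem_isDescent_iff_of_wordProd_eq x hω hζ hω hζ' rfl hζζ'.symm).mp h).2 j hj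
  · exact fun i hi => h.1 i ⟨ω, hω, rfl, hi⟩
  · exact fun j hj => h.2 j ⟨ζ, hζ, rfl, hj⟩

end Support

end CoxeterSystem

/-- if the support of `w` (or of `w'`) is all of `S`, then the coefficient
of `q^n` (`n = ℓ(w) + ℓ(w')`) in `N^{w,w'}`, the trace of `h ↦ T_w h T_{w'⁻¹}`, equals 1. -/
theorem hecke_trace_leading_coeff_eq_one_of_full_support
    {B W : Type} [Group W] [Fintype W] {M : CoxeterMatrix B} (cs : CoxeterSystem M W)
    (H : Type) [Ring H] [Algebra (RatFunc ℚ) H]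
    (T : Module.Basis W (RatFunc ℚ) H)
    (hone : T 1 = 1)
    (hmul : ∀ w w' : W, cs.length (w * w') = cs.length w + cs.length w' →
      T w * T w' = T (w * w'))
    (hquad : ∀ i : B, (T (cs.simple i) + 1) *
      (T (cs.simple i) - algebraMap (RatFunc ℚ) H RatFunc.X) = 0)
    (w w' : W) (n : ℕ) (hn : n = cs.length w + cs.length w')
    (hfull : cs.support w = Set.univ ∨ cs.support w' = Set.univ)
    (N : Polynomial ℚ)
    (hN : algebraMap (Polynomial ℚ) (RatFunc ℚ) N =
      LinearMap.trace (RatFunc ℚ) H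
        ((LinearMap.mulLeft (RatFunc ℚ) (T w)).comp
          (LinearMap.mulRight (RatFunc ℚ) (T w'⁻¹)))) :
    N.coeff n = 1 := by
  classical
  have hT : cs.IsHeckeBasis_s7 T := ⟨hone, hmul, hquad⟩
  obtain ⟨x₀, hx₀L, hx₀R⟩ := cs.exists_forall_isLeftDescent_and_isRightDescent
  choose P hP hcoeff using fun x => hT.exists_coeff_repr_mul_mul w x w'⁻¹
  have hNP : N = ∑ x, P x := RatFunc.algebraMap_injective ℚ <| by
    simp [hN, LinearMap.trace_eq_sum_repr T, hP, mul_assoc]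
  have htop (x : W) : ((∀ i ∈ cs.support w, cs.IsLeftDescent x i) ∧
      ∀ j ∈ cs.support w'⁻¹, cs.IsRightDescent x j) ↔ x = x₀ := by
    rw [cs.support_inv]
    refine ⟨fun ⟨hL, hR⟩ => ?_, by rintro rfl; exact ⟨fun i _ => hx₀L i, fun j _ => hx₀R j⟩⟩
    rcases hfull with h | h
    · exact cs.eq_of_forall_isLeftDescent (fun i => hL i (h ▸ trivial)) hx₀L
    · exact cs.eq_of_forall_isRightDescent (fun j => hR j (h ▸ trivial)) hx₀R
  rw [hNP, finsetSum_coeff, hn, ← cs.length_inv w']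
  simp only [hcoeff, htop, Finset.sum_ite_eq', Finset.mem_univ, if_true]
end

section
/- For w, w' in a Weyl group W with n = ℓ(w)+ℓ(w'), the polynomial N^{w,w'} satisfies the functional equation N^{w,w'}(q) = (−q)^n · N^{w,w'}(q^{-1}) (i.e., for 0 ≤ i ≤ n, the coefficient of q^i equals (−1)^n times the coefficient of q^{n−i}). -/
/-!
Let `σ` be the bar involution `v ↦ v⁻¹` of `ℚ(v)` and `q = v²`, so `σ q = q⁻¹`. Call `h ∈ H`
bar-symmetric of degree `d` if its coordinates satisfy `(-q)^d σ(c_x) = (-q)^{ℓ(x)} c_x`.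
`T_y` is bar-symmetric of degree `ℓ(y)`, and multiplying by `T_s` on either side raises the
degree by one: on an ascent `T_s T_z = T_{sz}`, on a descent `T_s T_z = (q - 1) T_z + q T_{sz}`,
and `(-q) σ(q - 1) = q - 1`, `(-q)² σ(q) = q`. Hence `T_w T_x T_{w'⁻¹}` has degree `ℓ(x) + n`,
so every diagonal entry of `h ↦ T_w h T_{w'⁻¹}`, and with them the trace `N(q)`, is fixed by
`c ↦ (-q)ⁿ σ(c)`: `N(q) = (-q)ⁿ N(q⁻¹)`. As `q` is transcendental over `ℚ`, this identity of
rational functions is one of polynomials, and comparing coefficients gives the claim.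
-/

open Polynomial

theorem Module.Basis.repr_map_apply {ι R M : Type*} [CommSemiring R] [AddCommMonoid M]
    [Module R M] (b : Module.Basis ι R M) (φ : M →ₗ[R] M) (m : M) (i : ι) :
    b.repr (φ m) i = (b.repr m).sum fun j c => c * b.repr (φ (b j)) i := by
  conv_lhs => rw [← b.linearCombination_repr m]
  simp [Finsupp.linearCombination_apply, map_finsuppSum, Finsupp.sum_apply]

section Hecke

variable {B W K H : Type*} [Group W] {M : CoxeterMatrix B} (cs : CoxeterSystem M W)
  [Field K] [Ring H] [Algebra K H] (T : Module.Basis W K H) (σ : K →+* K) (q : K)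

structure IsHeckeBasis_s12 : Prop where
  mul_of_length_add : ∀ w w' : W, cs.length (w * w') = cs.length w + cs.length w' →
    T w * T w' = T (w * w')
  quadratic : ∀ i : B, (T (cs.simple i) + 1) *
    (T (cs.simple i) - algebraMap K H q) = 0

def IsBarSymmetric (d : ℕ) (h : H) : Prop :=
  ∀ x, (-q) ^ d * σ (T.repr h x) = (-q) ^ cs.length x * T.repr h x

variable {cs T σ q}

theorem isBarSymmetric_basis (y : W) : IsBarSymmetric cs T σ q (cs.length y) (T y) := by
  classical
  intro x
  rw [T.repr_self, Finsupp.single_apply]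
  split_ifs with h <;> simp [h]

theorem IsBarSymmetric.map {φ : H →ₗ[K] H} {d e : ℕ}
    (hφ : ∀ z, IsBarSymmetric cs T σ q (cs.length z + e) (φ (T z))) {h : H}
    (hh : IsBarSymmetric cs T σ q d h) : IsBarSymmetric cs T σ q (d + e) (φ h) := by
  intro x
  rw [T.repr_map_apply, map_finsuppSum, Finsupp.mul_sum, Finsupp.mul_sum]
  refine Finsupp.sum_congr fun z _ => ?_
  rw [map_mul]
  linear_combination ((-q) ^ e * σ (T.repr (φ (T z)) x)) * hh z + T.repr h z * hφ z x

theorem isBarSymmetric_smul_add_smul (hq : q ≠ 0) (hσq : σ q = q⁻¹) {z z' : W}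
    (hz : cs.length z' + 1 = cs.length z) :
    IsBarSymmetric cs T σ q (cs.length z + 1) ((q - 1) • T z + q • T z') := by
  classical
  have hne : z' ≠ z := by rintro rfl; omega
  intro x
  simp only [map_add, map_smul, T.repr_self, Finsupp.add_apply, Finsupp.smul_apply,
    Finsupp.single_apply, smul_eq_mul]
  by_cases hx : z = x
  · subst hx
    simp only [if_pos, if_neg hne, mul_one, mul_zero, add_zero, map_sub, map_one, map_zero, hσq]
    field_simp
    ring
  · by_cases hx' : z' = x
    · subst hx'
      simp only [if_pos, if_neg hx, mul_one, mul_zero, zero_add, map_zero, hσq, ← hz]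
      field_simp
      ring
    · simp [hx, hx']

theorem IsHeckeBasis_s12.simple_mul_simple (hT : IsHeckeBasis_s12 cs T q) (i : B) :
    T (cs.simple i) * T (cs.simple i) = (q - 1) • T (cs.simple i) + q • 1 := by
  have hq : T (cs.simple i) * algebraMap K H q = q • T (cs.simple i) := by
    rw [← Algebra.commutes, Algebra.smul_def]
  have h := hT.quadratic i
  rw [add_mul, mul_sub, mul_sub, hq, one_mul, one_mul] at h
  rw [sub_smul, one_smul, ← Algebra.algebraMap_eq_smul_one, ← sub_eq_zero, ← h]
  abel

theorem IsHeckeBasis_s12.isBarSymmetric_simple_mul (hT : IsHeckeBasis_s12 cs T q) (hq : q ≠ 0)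
    (hσq : σ q = q⁻¹) (i : B) (z : W) :
    IsBarSymmetric cs T σ q (cs.length z + 1) (T (cs.simple i) * T z) := by
  rcases cs.length_simple_mul z i with hz | hz
  · rw [hT.mul_of_length_add _ _ (by rw [cs.length_simple, hz]; ring), ← hz]
    exact isBarSymmetric_basis _
  · have hTz : T (cs.simple i) * T (cs.simple i * z) = T z := by
      rw [hT.mul_of_length_add _ _ (by simp [cs.length_simple]; omega),
        cs.simple_mul_simple_cancel_left]
    have : T (cs.simple i) * T z = (q - 1) • T z + q • T (cs.simple i * z) := by
      rw [← hTz, ← mul_assoc, hT.simple_mul_simple, add_mul, smul_mul_assoc, smul_mul_assoc,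
        one_mul]
    rw [this]
    exact isBarSymmetric_smul_add_smul hq hσq hz

theorem IsHeckeBasis_s12.isBarSymmetric_mul_simple (hT : IsHeckeBasis_s12 cs T q) (hq : q ≠ 0)
    (hσq : σ q = q⁻¹) (i : B) (z : W) :
    IsBarSymmetric cs T σ q (cs.length z + 1) (T z * T (cs.simple i)) := by
  rcases cs.length_mul_simple z i with hz | hz
  · rw [hT.mul_of_length_add _ _ (by rw [cs.length_simple, hz]), ← hz]
    exact isBarSymmetric_basis _
  · have hTz : T (z * cs.simple i) * T (cs.simple i) = T z := by
      rw [hT.mul_of_length_add _ _ (by simp [cs.length_simple]; omega),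
        cs.simple_mul_simple_cancel_right]
    have : T z * T (cs.simple i) = (q - 1) • T z + q • T (z * cs.simple i) := by
      rw [← hTz, mul_assoc, hT.simple_mul_simple, mul_add, mul_smul_comm, mul_smul_comm,
        mul_one]
    rw [this]
    exact isBarSymmetric_smul_add_smul hq hσq hz

theorem IsHeckeBasis_s12.isBarSymmetric_basis_mul (hT : IsHeckeBasis_s12 cs T q) (hq : q ≠ 0)
    (hσq : σ q = q⁻¹) (u : W) {d : ℕ} {h : H} (hh : IsBarSymmetric cs T σ q d h) :
    IsBarSymmetric cs T σ q (d + cs.length u) (T u * h) := by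
  obtain ⟨k, hk⟩ : ∃ k, cs.length u = k := ⟨_, rfl⟩
  induction k generalizing u with
  | zero =>
    obtain rfl := cs.length_eq_zero_iff.mp hk
    refine IsBarSymmetric.map (φ := LinearMap.mulLeft K (T 1)) (fun z => ?_) hh
    simpa [hT.mul_of_length_add 1 z (by simp)] using isBarSymmetric_basis z
  | succ k ih =>
    obtain ⟨i, hi⟩ := cs.exists_leftDescent_of_ne_one (w := u) (by rintro rfl; simp at hk)
    have hlen := cs.isLeftDescent_iff.mp hi
    have hTu : T (cs.simple i) * T (cs.simple i * u) = T u := by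
      rw [hT.mul_of_length_add _ _ (by simp [cs.length_simple]; omega),
        cs.simple_mul_simple_cancel_left]
    rw [← hTu, mul_assoc, show d + cs.length u = d + cs.length (cs.simple i * u) + 1 by omega]
    exact IsBarSymmetric.map (φ := LinearMap.mulLeft K (T (cs.simple i)))
      (hT.isBarSymmetric_simple_mul hq hσq i) (ih _ (by omega))

theorem IsHeckeBasis_s12.isBarSymmetric_mul_basis (hT : IsHeckeBasis_s12 cs T q) (hq : q ≠ 0)
    (hσq : σ q = q⁻¹) (u : W) {d : ℕ} {h : H} (hh : IsBarSymmetric cs T σ q d h) :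
    IsBarSymmetric cs T σ q (d + cs.length u) (h * T u) := by
  obtain ⟨k, hk⟩ : ∃ k, cs.length u = k := ⟨_, rfl⟩
  induction k generalizing u with
  | zero =>
    obtain rfl := cs.length_eq_zero_iff.mp hk
    refine IsBarSymmetric.map (φ := LinearMap.mulRight K (T 1)) (fun z => ?_) hh
    simpa [hT.mul_of_length_add z 1 (by simp)] using isBarSymmetric_basis z
  | succ k ih =>
    obtain ⟨i, hi⟩ := cs.exists_rightDescent_of_ne_one (w := u) (by rintro rfl; simp at hk)
    have hlen := cs.isRightDescent_iff.mp hi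
    have hTu : T (u * cs.simple i) * T (cs.simple i) = T u := by
      rw [hT.mul_of_length_add _ _ (by simp [cs.length_simple]; omega),
        cs.simple_mul_simple_cancel_right]
    rw [← hTu, ← mul_assoc, show d + cs.length u = d + cs.length (u * cs.simple i) + 1 by omega]
    exact IsBarSymmetric.map (φ := LinearMap.mulRight K (T (cs.simple i)))
      (hT.isBarSymmetric_mul_simple hq hσq i) (ih _ (by omega))

theorem bar_trace_eq_of_isBarSymmetric [Fintype W] (hq : q ≠ 0) {φ : H →ₗ[K] H} {n : ℕ}
    (hφ : ∀ x, IsBarSymmetric cs T σ q (cs.length x + n) (φ (T x))) :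
    (-q) ^ n * σ (LinearMap.trace K H φ) = LinearMap.trace K H φ := by
  classical
  have hdiag : LinearMap.trace K H φ = ∑ x, T.repr (φ (T x)) x := by
    simp [LinearMap.trace_eq_matrix_trace K T, Matrix.trace, LinearMap.toMatrix_apply]
  rw [hdiag, map_sum, Finset.mul_sum]
  refine Finset.sum_congr rfl fun x _ => ?_
  refine mul_left_cancel₀ (pow_ne_zero (cs.length x) (neg_ne_zero.2 hq)) ?_
  linear_combination hφ x x

end Hecke

theorem Polynomial.coeff_eq_neg_one_pow_mul_coeff_of_aeval_eq {R K : Type*} [CommRing R]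
    [Field K] [Algebra R K] {t : K} (ht : Transcendental R t) {N : R[X]} {n : ℕ}
    (h : aeval t N = (-t) ^ n * aeval t⁻¹ N) {i : ℕ} (hi : i ≤ n) :
    N.coeff i = (-1) ^ n * N.coeff (n - i) := by
  have : Nontrivial R := (algebraMap R K).domain_nontrivial
  have ht0 : t ≠ 0 := by rintro rfl; exact ht isAlgebraic_zero
  obtain ⟨k, hk⟩ : ∃ k, N.natDegree ≤ n + k := ⟨N.natDegree, by omega⟩
  have hrefl : aeval t (reflect (n + k) N) = t ^ (n + k) * aeval t⁻¹ N := by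
    let : Invertible t := invertibleOfNonzero ht0
    have := eval₂_reflect_mul_pow (algebraMap R K) t⁻¹ (n + k) N hk
    rw [invOf_eq_inv, inv_inv] at this
    rw [aeval_def, aeval_def, ← this, inv_pow, mul_left_comm,
      mul_inv_cancel₀ (pow_ne_zero _ ht0), mul_one]
  have hpoly : X ^ k * N = C ((-1) ^ n) * reflect (n + k) N := by
    refine transcendental_iff_injective.mp ht ?_
    simp only [map_mul, map_pow, aeval_X, map_neg, map_one, h, hrefl]
    ring
  have := congrArg (coeff · (k + i)) hpoly
  simp only [coeff_X_pow_mul', coeff_C_mul, coeff_reflect] at this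
  rwa [if_pos (by omega), Nat.add_sub_cancel_left, revAt_le (by omega),
    show n + k - (k + i) = n - i by omega] at this

theorem RatFunc.exists_ringHom_X_eq {K L : Type*} [Field K] [Field L] [Algebra K L] {f : L}
    (hf : Transcendental K f) : ∃ σ : RatFunc K →+* L, σ RatFunc.X = f :=
  ⟨((IntermediateField.val _).comp (RatFunc.algEquivOfTranscendental f hf).toAlgHom).toRingHom,
    by simp [RatFunc.algEquivOfTranscendental_X]⟩

theorem hecke_trace_functional_equation_general
    {B W : Type} [Group W] [Fintype W] {M : CoxeterMatrix B} (cs : CoxeterSystem M W)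
    (H : Type) [Ring H] [Algebra (RatFunc ℚ) H]
    (T : Module.Basis W (RatFunc ℚ) H)
    (hmul : ∀ w w' : W, cs.length (w * w') = cs.length w + cs.length w' →
      T w * T w' = T (w * w'))
    (hquad : ∀ i : B, (T (cs.simple i) + 1) *
      (T (cs.simple i) - algebraMap (RatFunc ℚ) H (RatFunc.X ^ 2)) = 0)
    (w w' : W) (n : ℕ) (hn : n = cs.length w + cs.length w')
    (N : Polynomial ℚ)
    (hN : Polynomial.aeval ((RatFunc.X : RatFunc ℚ) ^ 2) N =
      LinearMap.trace (RatFunc ℚ) H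
        ((LinearMap.mulLeft (RatFunc ℚ) (T w)).comp
          (LinearMap.mulRight (RatFunc ℚ) (T w'⁻¹)))) :
    ∀ i : ℕ, i ≤ n → N.coeff i = (-1) ^ n * N.coeff (n - i) := by
  intro i hi
  -- `RatFunc.transcendental_X` uses the `ℚ`-algebra structure of `RatFunc ℚ` coming from `ℚ[X]`,
  -- which is not reducibly equal to the one coming from `DivisionRing`.
  have hX : Transcendental ℚ (RatFunc.X : RatFunc ℚ) := by
    convert RatFunc.transcendental_X (K := ℚ)
    exact Subsingleton.elim _ _
  have hXinv : Transcendental ℚ (RatFunc.X : RatFunc ℚ)⁻¹ := by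
    rwa [Transcendental, IsAlgebraic.inv_iff]
  obtain ⟨σ, hσ⟩ := RatFunc.exists_ringHom_X_eq hXinv
  set q : RatFunc ℚ := RatFunc.X ^ 2
  have hq : q ≠ 0 := pow_ne_zero _ RatFunc.X_ne_zero
  have hσq : σ q = q⁻¹ := by simp [q, hσ]
  have hT : IsHeckeBasis_s12 cs T q := ⟨hmul, hquad⟩
  have hφ : ∀ x, IsBarSymmetric cs T σ q (cs.length x + n)
      ((LinearMap.mulLeft (RatFunc ℚ) (T w)).comp
        (LinearMap.mulRight (RatFunc ℚ) (T w'⁻¹)) (T x)) := fun x => by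
    have := hT.isBarSymmetric_basis_mul hq hσq w
      (hT.isBarSymmetric_mul_basis hq hσq w'⁻¹ (isBarSymmetric_basis x))
    rwa [cs.length_inv, add_assoc, add_comm (cs.length w'), ← hn] at this
  have hfun : aeval q N = (-q) ^ n * aeval q⁻¹ N := by
    rw [← hσq, ← σ.toRatAlgHom_apply, aeval_algHom_apply, σ.toRatAlgHom_apply, hN]
    exact (bar_trace_eq_of_isBarSymmetric hq hφ).symm
  exact coeff_eq_neg_one_pow_mul_coeff_of_aeval_eq (hX.pow two_pos) hfun hi

/-- the polynomial `N^{w,w'} ∈ ℤ[q]` (trace of `h ↦ T_w h T_{w'⁻¹}` on the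
Iwahori–Hecke algebra over `ℚ(v)`, `q = v²`) satisfies `N^{w,w'}(q) = (−q)ⁿ N^{w,w'}(q⁻¹)`
with `n = ℓ(w) + ℓ(w')`; i.e. for `0 ≤ i ≤ n` the coefficient of `q^i` equals `(−1)ⁿ`
times the coefficient of `q^{n−i}`. -/
theorem hecke_trace_functional_equation
    {B W : Type} [Group W] [Fintype W] {M : CoxeterMatrix B} (cs : CoxeterSystem M W)
    (H : Type) [Ring H] [Algebra (RatFunc ℚ) H]
    (T : Module.Basis W (RatFunc ℚ) H)
    (hone : T 1 = 1)
    (hmul : ∀ w w' : W, cs.length (w * w') = cs.length w + cs.length w' →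
      T w * T w' = T (w * w'))
    (hquad : ∀ i : B, (T (cs.simple i) + 1) *
      (T (cs.simple i) - algebraMap (RatFunc ℚ) H (RatFunc.X ^ 2)) = 0)
    (w w' : W) (n : ℕ) (hn : n = cs.length w + cs.length w')
    (N : Polynomial ℚ)
    (hN : Polynomial.aeval ((RatFunc.X : RatFunc ℚ) ^ 2) N =
      LinearMap.trace (RatFunc ℚ) H
        ((LinearMap.mulLeft (RatFunc ℚ) (T w)).comp
          (LinearMap.mulRight (RatFunc ℚ) (T w'⁻¹)))) :
    ∀ i : ℕ, i ≤ n → N.coeff i = (-1) ^ n * N.coeff (n - i) :=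
  hecke_trace_functional_equation_general cs H T hmul hquad w w' n hn N hN
end
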